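/- Along any solution of the tilted Bianchi type VI_{-1/9} system with Ω(τ) > 0 and 0 < V(τ) < 1, the function Z1 = Ω^{1−γ}·(1−V²)^{(2−γ)/2} / (G+^{1−γ}·V^{γ}) satisfies the identity Z1' = (2(1−γ)q + (2−γ) + γS)·Z1. -/

import Mathlib

noncomputable section

namespace BianchiVI

/-- squared tilt speed `V² = v1² + v2² + v3²`. -/
def Vsq (v1 v2 v3 : ℝ) : ℝ := v1^2 + v2^2 + v3^2

/-- `G₊ = 1 + (γ-1) V²`. -/
def Gp (γ v1 v2 v3 : ℝ) : ℝ := 1 + (γ - 1) * Vsq v1 v2 v3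

/-- total shear `Σ²`. -/
def Sig2 (sp sm s12 s13 s23 : ℝ) : ℝ := sp^2 + sm^2 + s12^2 + s13^2 + s23^2

/-- deceleration parameter `q`. -/
def qdef (γ sp sm s12 s13 s23 Om v1 v2 v3 : ℝ) : ℝ :=
  2 * Sig2 sp sm s12 s13 s23
    + (1/2) * ((3*γ - 2) + (2 - γ) * Vsq v1 v2 v3) * Om / Gp γ v1 v2 v3

/-- `P = Σ_{ab} v^a v^b · V²`, so that `S = P/V²`. -/
def Pdef (sp sm s12 s13 s23 v1 v2 v3 : ℝ) : ℝ :=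
  -2*sp*v1^2 + (sp + Real.sqrt 3 * sm) * v2^2 + (sp - Real.sqrt 3 * sm) * v3^2
    + 2*Real.sqrt 3*(s12*v1*v2 + s13*v1*v3 + s23*v2*v3)

/-- `S = Σ_{ab} c^a c^b`. -/
def Sdef (sp sm s12 s13 s23 v1 v2 v3 : ℝ) : ℝ :=
  if 0 < Vsq v1 v2 v3 then Pdef sp sm s12 s13 s23 v1 v2 v3 / Vsq v1 v2 v3 else 0

/-- the quantity `T`. -/
def Tdef (γ sp sm s12 s13 s23 A v1 v2 v3 : ℝ) : ℝ :=
  (((3*γ - 4) - 2*(γ-1)*A*v1) * (1 - Vsq v1 v2 v3)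
      + (2 - γ) * Pdef sp sm s12 s13 s23 v1 v2 v3)
    / (1 - (γ - 1) * Vsq v1 v2 v3)

/-- right-hand side of the evolution equation. -/
def rhsSp (γ sp sm s12 s13 s23 N lam A Om v1 v2 v3 : ℝ) : ℝ :=
  (qdef γ sp sm s12 s13 s23 Om v1 v2 v3 - 2) * sp + 3*(s12^2 + s13^2) - 2*N^2 + (γ*Om/(2*(Gp γ v1 v2 v3))) * (-2*v1^2 + v2^2 + v3^2)

/-- right-hand side of the evolution equation. -/
def rhsSm (γ sp sm s12 s13 s23 N lam A Om v1 v2 v3 : ℝ) : ℝ :=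
  (qdef γ sp sm s12 s13 s23 Om v1 v2 v3 - 2 - 2*Real.sqrt 3*s23*lam) * sm + Real.sqrt 3*(s12^2 - s13^2) + 2*A*N + (Real.sqrt 3*γ*Om/(2*(Gp γ v1 v2 v3))) * (v2^2 - v3^2)

/-- right-hand side of the evolution equation. -/
def rhsS12 (γ sp sm s12 s13 s23 N lam A Om v1 v2 v3 : ℝ) : ℝ :=
  (qdef γ sp sm s12 s13 s23 Om v1 v2 v3 - 2 - 3*sp - Real.sqrt 3*sm) * s12 - Real.sqrt 3*(s23 + sm*lam)*s13 + (Real.sqrt 3*γ*Om/(Gp γ v1 v2 v3))*v1*v2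

/-- right-hand side of the evolution equation. -/
def rhsS13 (γ sp sm s12 s13 s23 N lam A Om v1 v2 v3 : ℝ) : ℝ :=
  (qdef γ sp sm s12 s13 s23 Om v1 v2 v3 - 2 - 3*sp + Real.sqrt 3*sm) * s13 - Real.sqrt 3*(s23 - sm*lam)*s12 + (Real.sqrt 3*γ*Om/(Gp γ v1 v2 v3))*v1*v3

/-- right-hand side of the evolution equation. -/
def rhsS23 (γ sp sm s12 s13 s23 N lam A Om v1 v2 v3 : ℝ) : ℝ :=
  (qdef γ sp sm s12 s13 s23 Om v1 v2 v3 - 2) * s23 - 2*Real.sqrt 3*N^2*lam + 2*Real.sqrt 3*lam*sm^2 + 2*Real.sqrt 3*s12*s13 + (Real.sqrt 3*γ*Om/(Gp γ v1 v2 v3))*v2*v3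

/-- right-hand side of the evolution equation. -/
def rhsN (γ sp sm s12 s13 s23 N lam A Om v1 v2 v3 : ℝ) : ℝ :=
  (qdef γ sp sm s12 s13 s23 Om v1 v2 v3 + 2*sp + 2*Real.sqrt 3*s23*lam) * N

/-- right-hand side of the evolution equation. -/
def rhsLam (γ sp sm s12 s13 s23 N lam A Om v1 v2 v3 : ℝ) : ℝ :=
  2*Real.sqrt 3*s23*(1 - lam^2)

/-- right-hand side of the evolution equation. -/
def rhsA (γ sp sm s12 s13 s23 N lam A Om v1 v2 v3 : ℝ) : ℝ :=
  (qdef γ sp sm s12 s13 s23 Om v1 v2 v3 + 2*sp) * A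

/-- right-hand side of the evolution equation. -/
def rhsOm (γ sp sm s12 s13 s23 N lam A Om v1 v2 v3 : ℝ) : ℝ :=
  (Om/(Gp γ v1 v2 v3)) * (2*(qdef γ sp sm s12 s13 s23 Om v1 v2 v3) - (3*γ-2) + 2*γ*A*v1 + (2*(qdef γ sp sm s12 s13 s23 Om v1 v2 v3)*(γ-1) - (2-γ)) * Vsq v1 v2 v3 - γ*(Pdef sp sm s12 s13 s23 v1 v2 v3))

/-- right-hand side of the evolution equation. -/
def rhsV1 (γ sp sm s12 s13 s23 N lam A Om v1 v2 v3 : ℝ) : ℝ :=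
  ((Tdef γ sp sm s12 s13 s23 A v1 v2 v3) + 2*sp)*v1 - 2*Real.sqrt 3*s13*v3 - 2*Real.sqrt 3*s12*v2 - A*(v2^2 + v3^2) - Real.sqrt 3*N*(v2^2 - v3^2)

/-- right-hand side of the evolution equation. -/
def rhsV2 (γ sp sm s12 s13 s23 N lam A Om v1 v2 v3 : ℝ) : ℝ :=
  ((Tdef γ sp sm s12 s13 s23 A v1 v2 v3) - sp - Real.sqrt 3*sm)*v2 - Real.sqrt 3*(s23 + sm*lam)*v3 + Real.sqrt 3*lam*N*v1*v3 + (A + Real.sqrt 3*N)*v1*v2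

/-- right-hand side of the evolution equation. -/
def rhsV3 (γ sp sm s12 s13 s23 N lam A Om v1 v2 v3 : ℝ) : ℝ :=
  ((Tdef γ sp sm s12 s13 s23 A v1 v2 v3) - sp + Real.sqrt 3*sm)*v3 - Real.sqrt 3*(s23 - sm*lam)*v2 - Real.sqrt 3*lam*N*v1*v2 + (A - Real.sqrt 3*N)*v1*v3

/-- the five constraint equations (C1)-(C5). -/
def SatisfiesConstraints (γ sp sm s12 s13 s23 N lam A Om v1 v2 v3 : ℝ) : Prop :=
  Sig2 sp sm s12 s13 s23 + A^2 + N^2 + Om = 1 ∧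
  2*sp*A + 2*sm*N + γ*Om*v1/(Gp γ v1 v2 v3) = 0 ∧
  -(s12*(N + Real.sqrt 3*A) + s13*lam*N) + γ*Om*v2/(Gp γ v1 v2 v3) = 0 ∧
  s13*(N - Real.sqrt 3*A) + s12*lam*N + γ*Om*v3/(Gp γ v1 v2 v3) = 0 ∧
  3*A^2 = (1 - lam^2)*N^2

/-- equilibrium point: all twelve right-hand sides vanish. -/
def IsEquilibrium (γ sp sm s12 s13 s23 N lam A Om v1 v2 v3 : ℝ) : Prop :=
  rhsSp γ sp sm s12 s13 s23 N lam A Om v1 v2 v3 = 0 ∧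
  rhsSm γ sp sm s12 s13 s23 N lam A Om v1 v2 v3 = 0 ∧
  rhsS12 γ sp sm s12 s13 s23 N lam A Om v1 v2 v3 = 0 ∧
  rhsS13 γ sp sm s12 s13 s23 N lam A Om v1 v2 v3 = 0 ∧
  rhsS23 γ sp sm s12 s13 s23 N lam A Om v1 v2 v3 = 0 ∧
  rhsN γ sp sm s12 s13 s23 N lam A Om v1 v2 v3 = 0 ∧
  rhsLam γ sp sm s12 s13 s23 N lam A Om v1 v2 v3 = 0 ∧
  rhsA γ sp sm s12 s13 s23 N lam A Om v1 v2 v3 = 0 ∧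
  rhsOm γ sp sm s12 s13 s23 N lam A Om v1 v2 v3 = 0 ∧
  rhsV1 γ sp sm s12 s13 s23 N lam A Om v1 v2 v3 = 0 ∧
  rhsV2 γ sp sm s12 s13 s23 N lam A Om v1 v2 v3 = 0 ∧
  rhsV3 γ sp sm s12 s13 s23 N lam A Om v1 v2 v3 = 0

/-- a solution of the tilted Bianchi type VI_(-1/9) system on the set `dom`:
the twelve evolution equations and the five constraints hold at every `τ ∈ dom`. -/
def IsSolutionOn (γ : ℝ) (dom : Set ℝ) (sp sm s12 s13 s23 N lam A Om v1 v2 v3 : ℝ → ℝ) : Prop :=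
  ∀ τ ∈ dom,
    (HasDerivAt sp (rhsSp γ (sp τ) (sm τ) (s12 τ) (s13 τ) (s23 τ) (N τ) (lam τ) (A τ) (Om τ) (v1 τ) (v2 τ) (v3 τ)) τ ∧
    HasDerivAt sm (rhsSm γ (sp τ) (sm τ) (s12 τ) (s13 τ) (s23 τ) (N τ) (lam τ) (A τ) (Om τ) (v1 τ) (v2 τ) (v3 τ)) τ ∧
    HasDerivAt s12 (rhsS12 γ (sp τ) (sm τ) (s12 τ) (s13 τ) (s23 τ) (N τ) (lam τ) (A τ) (Om τ) (v1 τ) (v2 τ) (v3 τ)) τ ∧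
    HasDerivAt s13 (rhsS13 γ (sp τ) (sm τ) (s12 τ) (s13 τ) (s23 τ) (N τ) (lam τ) (A τ) (Om τ) (v1 τ) (v2 τ) (v3 τ)) τ ∧
    HasDerivAt s23 (rhsS23 γ (sp τ) (sm τ) (s12 τ) (s13 τ) (s23 τ) (N τ) (lam τ) (A τ) (Om τ) (v1 τ) (v2 τ) (v3 τ)) τ ∧
    HasDerivAt N (rhsN γ (sp τ) (sm τ) (s12 τ) (s13 τ) (s23 τ) (N τ) (lam τ) (A τ) (Om τ) (v1 τ) (v2 τ) (v3 τ)) τ ∧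
    HasDerivAt lam (rhsLam γ (sp τ) (sm τ) (s12 τ) (s13 τ) (s23 τ) (N τ) (lam τ) (A τ) (Om τ) (v1 τ) (v2 τ) (v3 τ)) τ ∧
    HasDerivAt A (rhsA γ (sp τ) (sm τ) (s12 τ) (s13 τ) (s23 τ) (N τ) (lam τ) (A τ) (Om τ) (v1 τ) (v2 τ) (v3 τ)) τ ∧
    HasDerivAt Om (rhsOm γ (sp τ) (sm τ) (s12 τ) (s13 τ) (s23 τ) (N τ) (lam τ) (A τ) (Om τ) (v1 τ) (v2 τ) (v3 τ)) τ ∧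
    HasDerivAt v1 (rhsV1 γ (sp τ) (sm τ) (s12 τ) (s13 τ) (s23 τ) (N τ) (lam τ) (A τ) (Om τ) (v1 τ) (v2 τ) (v3 τ)) τ ∧
    HasDerivAt v2 (rhsV2 γ (sp τ) (sm τ) (s12 τ) (s13 τ) (s23 τ) (N τ) (lam τ) (A τ) (Om τ) (v1 τ) (v2 τ) (v3 τ)) τ ∧
    HasDerivAt v3 (rhsV3 γ (sp τ) (sm τ) (s12 τ) (s13 τ) (s23 τ) (N τ) (lam τ) (A τ) (Om τ) (v1 τ) (v2 τ) (v3 τ)) τ) ∧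
    SatisfiesConstraints γ (sp τ) (sm τ) (s12 τ) (s13 τ) (s23 τ) (N τ) (lam τ) (A τ) (Om τ) (v1 τ) (v2 τ) (v3 τ)

/-- the monotone function `Z1`. -/
def Z1fun (γ : ℝ) (Om v1 v2 v3 : ℝ → ℝ) : ℝ → ℝ := fun τ =>
  Om τ ^ (1 - γ) * (1 - Vsq (v1 τ) (v2 τ) (v3 τ)) ^ ((2 - γ)/2)
    / (Gp γ (v1 τ) (v2 τ) (v3 τ) ^ (1 - γ) * Real.sqrt (Vsq (v1 τ) (v2 τ) (v3 τ)) ^ γ)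

/-!
`Z1` is a product of powers of `Ω`, `1 - V²`, `G₊` and `V²`, so `Z1' / Z1` is the matching linear
combination of their logarithmic derivatives; only the `Ω` and `v` equations enter. The `v` equations
give `(V²)' = 2 (T V² - P)`, the non-`T` terms cancelling in `v · v'`. In the combined contribution of
the three `V²`-dependent factors the denominator of `T` cancels, leaving
`γ (S - (3γ - 4) + 2 (γ - 1) A v₁) / G₊`; adding `(1 - γ) Ω' / Ω` removes the `A v₁` terms and the
remaining terms regroup into `2 (1 - γ) q + (2 - γ) + γ S`.
-/

def HasLogDerivAt (f : ℝ → ℝ) (L x : ℝ) : Prop := HasDerivAt f (L * f x) x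

theorem _root_.HasDerivAt.hasLogDerivAt_rpow_const {f : ℝ → ℝ} {f' x : ℝ} (p : ℝ)
    (hf : HasDerivAt f f' x) (hx : f x ≠ 0) :
    HasLogDerivAt (fun t => f t ^ p) (p * (f' / f x)) x :=
  (hf.rpow_const (Or.inl hx)).congr_deriv <| by
    rw [Real.rpow_sub_one hx]; field_simp

theorem HasLogDerivAt.mul {f g : ℝ → ℝ} {a b x : ℝ}
    (hf : HasLogDerivAt f a x) (hg : HasLogDerivAt g b x) :
    HasLogDerivAt (fun t => f t * g t) (a + b) x :=
  (HasDerivAt.mul hf hg).congr_deriv (by ring)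

theorem HasLogDerivAt.div {f g : ℝ → ℝ} {a b x : ℝ}
    (hf : HasLogDerivAt f a x) (hg : HasLogDerivAt g b x) (hgx : g x ≠ 0) :
    HasLogDerivAt (fun t => f t / g t) (a - b) x :=
  (HasDerivAt.div hf hg hgx).congr_deriv (by field_simp)

theorem hasDerivAt_Vsq {v1 v2 v3 : ℝ → ℝ} {a b c τ : ℝ} (h1 : HasDerivAt v1 a τ)
    (h2 : HasDerivAt v2 b τ) (h3 : HasDerivAt v3 c τ) :
    HasDerivAt (fun t => Vsq (v1 t) (v2 t) (v3 t)) (2 * (v1 τ * a + v2 τ * b + v3 τ * c)) τ :=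
  (((h1.pow 2).add (h2.pow 2)).add (h3.pow 2)).congr_deriv (by push_cast; ring)

theorem Z1fun_eq_rpow (γ : ℝ) (Om v1 v2 v3 : ℝ → ℝ) :
    Z1fun γ Om v1 v2 v3 = fun τ =>
      Om τ ^ (1 - γ) * (1 - Vsq (v1 τ) (v2 τ) (v3 τ)) ^ ((2 - γ) / 2)
        / (Gp γ (v1 τ) (v2 τ) (v3 τ) ^ (1 - γ) * Vsq (v1 τ) (v2 τ) (v3 τ) ^ (γ / 2)) := by
  funext τ
  rw [Z1fun, Real.rpow_div_two_eq_sqrt γ (by unfold Vsq; positivity)]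

theorem hasLogDerivAt_Z1fun {γ τ Om' W' : ℝ} {Om v1 v2 v3 : ℝ → ℝ}
    (hOm : HasDerivAt Om Om' τ) (hW : HasDerivAt (fun t => Vsq (v1 t) (v2 t) (v3 t)) W' τ)
    (hOm0 : Om τ ≠ 0) (hW0 : 0 < Vsq (v1 τ) (v2 τ) (v3 τ))
    (hW1 : 1 - Vsq (v1 τ) (v2 τ) (v3 τ) ≠ 0) (hG : 0 < Gp γ (v1 τ) (v2 τ) (v3 τ)) :
    HasLogDerivAt (Z1fun γ Om v1 v2 v3)
      ((1 - γ) * (Om' / Om τ) + ((2 - γ) / 2 * (-W' / (1 - Vsq (v1 τ) (v2 τ) (v3 τ)))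
        - ((1 - γ) * ((γ - 1) * W' / Gp γ (v1 τ) (v2 τ) (v3 τ))
          + γ / 2 * (W' / Vsq (v1 τ) (v2 τ) (v3 τ))))) τ := by
  have hG' : HasDerivAt (fun t => Gp γ (v1 t) (v2 t) (v3 t)) ((γ - 1) * W') τ :=
    (hW.const_mul (γ - 1)).const_add 1
  have hnum := (hOm.hasLogDerivAt_rpow_const (1 - γ) hOm0).mul
    ((hW.const_sub 1).hasLogDerivAt_rpow_const ((2 - γ) / 2) hW1)
  have hden := (hG'.hasLogDerivAt_rpow_const (1 - γ) hG.ne').mul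
    (hW.hasLogDerivAt_rpow_const (γ / 2) hW0.ne')
  rw [Z1fun_eq_rpow, ← add_sub_assoc]
  exact hnum.div hden (by positivity)

theorem dot_rhsV_eq (γ sp sm s12 s13 s23 N lam A Om v1 v2 v3 : ℝ) :
    v1 * rhsV1 γ sp sm s12 s13 s23 N lam A Om v1 v2 v3
      + v2 * rhsV2 γ sp sm s12 s13 s23 N lam A Om v1 v2 v3
      + v3 * rhsV3 γ sp sm s12 s13 s23 N lam A Om v1 v2 v3
      = Tdef γ sp sm s12 s13 s23 A v1 v2 v3 * Vsq v1 v2 v3 - Pdef sp sm s12 s13 s23 v1 v2 v3 := by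
  simp only [rhsV1, rhsV2, rhsV3, Pdef, Vsq]
  ring

/-- The denominator `1 - (γ - 1) W` of `T` cancels: the three `W'`-coefficients on the left sum to
`-γ (1 - (γ - 1) W) / (2 W (1 - W) (1 + (γ - 1) W))`. -/
theorem tilt_logDeriv_eq {γ W P x T W' : ℝ} (hW : W ≠ 0) (h1W : 1 - W ≠ 0)
    (hG : 1 + (γ - 1) * W ≠ 0)
    (hT : T * (1 - (γ - 1) * W) = ((3 * γ - 4) - 2 * (γ - 1) * x) * (1 - W) + (2 - γ) * P)
    (hW' : W' = 2 * (T * W - P)) :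
    (2 - γ) / 2 * (-W' / (1 - W)) - ((1 - γ) * ((γ - 1) * W' / (1 + (γ - 1) * W)) + γ / 2 * (W' / W))
      = γ / (1 + (γ - 1) * W) * (P / W - (3 * γ - 4) + 2 * (γ - 1) * x) := by
  subst hW'
  generalize hGdef : 1 + (γ - 1) * W = G at hG ⊢
  field_simp
  subst hGdef
  linear_combination (-γ * W) * hT

theorem Z1_logDeriv_eq {γ q Om W P x Om' : ℝ} (hOm : Om ≠ 0) (hW : W ≠ 0)
    (hG : 1 + (γ - 1) * W ≠ 0)
    (hOm' : Om' = Om / (1 + (γ - 1) * W) * (2 * q - (3 * γ - 2) + 2 * γ * x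
      + (2 * q * (γ - 1) - (2 - γ)) * W - γ * P)) :
    (1 - γ) * (Om' / Om) + γ / (1 + (γ - 1) * W) * (P / W - (3 * γ - 4) + 2 * (γ - 1) * x)
      = 2 * (1 - γ) * q + (2 - γ) + γ * (P / W) := by
  subst hOm'
  field_simp
  ring

theorem Z1_evolution (γ : ℝ) (hγ : 0 < γ ∧ γ < 2) (dom : Set ℝ)
    (sp sm s12 s13 s23 N lam A Om v1 v2 v3 : ℝ → ℝ)
    (hsol : IsSolutionOn γ dom sp sm s12 s13 s23 N lam A Om v1 v2 v3)
    (hOm : ∀ τ ∈ dom, 0 < Om τ)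
    (hV : ∀ τ ∈ dom, 0 < Real.sqrt (Vsq (v1 τ) (v2 τ) (v3 τ)) ∧ Real.sqrt (Vsq (v1 τ) (v2 τ) (v3 τ)) < 1) :
    ∀ τ ∈ dom,
      HasDerivAt (Z1fun γ Om v1 v2 v3)
        ((2*(1-γ)*(qdef γ (sp τ) (sm τ) (s12 τ) (s13 τ) (s23 τ) (Om τ) (v1 τ) (v2 τ) (v3 τ)) + (2-γ) + γ * Sdef (sp τ) (sm τ) (s12 τ) (s13 τ) (s23 τ) (v1 τ) (v2 τ) (v3 τ))
          * Z1fun γ Om v1 v2 v3 τ) τ := by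
  intro τ hτ
  obtain ⟨⟨-, -, -, -, -, -, -, -, hOm', hv1, hv2, hv3⟩, -⟩ := hsol τ hτ
  have hW := hasDerivAt_Vsq hv1 hv2 hv3
  rw [dot_rhsV_eq] at hW
  obtain ⟨hW0, hW1⟩ := hV τ hτ
  rw [Real.sqrt_pos] at hW0
  rw [Real.sqrt_lt' one_pos, one_pow] at hW1
  have hG : 0 < 1 + (γ - 1) * Vsq (v1 τ) (v2 τ) (v3 τ) := by nlinarith
  have hF : 0 < 1 - (γ - 1) * Vsq (v1 τ) (v2 τ) (v3 τ) := by nlinarith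
  have hZ := hasLogDerivAt_Z1fun hOm' hW (hOm τ hτ).ne' hW0 (sub_ne_zero.2 hW1.ne') hG
  rw [Gp, tilt_logDeriv_eq (x := A τ * v1 τ) hW0.ne' (sub_ne_zero.2 hW1.ne') hG.ne' ?hT rfl,
    Z1_logDeriv_eq (q := qdef γ (sp τ) (sm τ) (s12 τ) (s13 τ) (s23 τ) (Om τ) (v1 τ) (v2 τ) (v3 τ))
      (hOm τ hτ).ne' hW0.ne' hG.ne' (by rw [rhsOm, Gp]; ring)] at hZ
  · rw [Sdef, if_pos hW0]
    exact hZ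
  case hT => rw [Tdef, div_mul_cancel₀ _ hF.ne']; ring

end BianchiVI
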